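/- arXiv:math/0411557 — 2 statements merged into one kernel-verified Lean document; each statement's English description precedes it below -/
import Mathlib

section
/- For every natural number n ≥ 2, the number of loopless rank-2 matroids on a fixed n-element ground set equals b(n) − 1, where b(n) denotes the n-th Bell number. -/
/-!
In a matroid without loops, "equal or spanning a dependent pair" is an equivalence relation
(transitivity is the augmentation axiom applied to a singleton and a pair). If the rank is two,
the matroid is recovered from this relation: a set is independent iff it has at most two
elements, no two of them related. Conversely, every equivalence relation `s` gives such a
matroid, the pullback of the rank-two uniform matroid along `α → α ⧸ s`; it has rank two
exactly when `s` has at least two classes. So loopless rank-two matroids correspond to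
partitions with at least two blocks, that is, to all partitions but one.
-/

/-- The `k`-th Bell number: the number of equivalence relations (partitions) of a
`k`-element set. -/
noncomputable def bellNum (k : ℕ) : ℕ := Nat.card (Setoid (Fin k))

open Set

namespace Matroid

variable {α : Type*} {M : Matroid α}

def unifOn (E : Set α) (k : ℕ) : Matroid α :=
  IndepMatroid.matroid <| IndepMatroid.ofBddAugment E (fun I ↦ I ⊆ E ∧ I.encard ≤ k)
    (by simp)
    (fun _ _ hJ hIJ ↦ ⟨hIJ.trans hJ.1, (encard_le_encard hIJ).trans hJ.2⟩)
    (by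
      rintro I J ⟨hIE, -⟩ ⟨hJE, hJk⟩ hIJ
      obtain ⟨e, heJ, heI⟩ : (J \ I).Nonempty :=
        sdiff_nonempty.2 fun hJI ↦ (encard_le_encard hJI).not_gt hIJ
      refine ⟨e, heJ, heI, insert_subset (hJE heJ) hIE, ?_⟩
      rw [encard_insert_of_notMem heI]
      exact (Order.add_one_le_of_lt hIJ).trans hJk)
    ⟨k, fun _ h ↦ h.2⟩
    (fun _ h ↦ h.1)

@[simp] lemma unifOn_indep_iff {E I : Set α} {k : ℕ} :
    (unifOn E k).Indep I ↔ I ⊆ E ∧ I.encard ≤ k := by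
  simp [unifOn]

lemma ground_eq_univ_of_forall_indep_singleton (hM : ∀ x, M.Indep {x}) : M.E = univ :=
  eq_univ_of_forall fun x ↦ (hM x).subset_ground rfl

lemma Indep.indep_pair_or_indep_pair {x y z : α} (hxz : M.Indep {x, z})
    (hne : x ≠ z) (hy : M.Indep {y}) : M.Indep {x, y} ∨ M.Indep {z, y} := by
  obtain ⟨e, ⟨hexz, -⟩, he⟩ := hy.augment hxz (by simp [encard_pair hne])
  obtain rfl | rfl := hexz <;> simp_all

def parallelSetoid (M : Matroid α) (hM : ∀ x, M.Indep {x}) : Setoid α where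
  r x y := x = y ∨ ¬ M.Indep {x, y}
  iseqv.refl _ := .inl rfl
  iseqv.symm := by
    rintro x y (rfl | h)
    exacts [.inl rfl, .inr (pair_comm x y ▸ h)]
  iseqv.trans := by
    rintro x y z (rfl | hxy) (rfl | hyz)
    · exact .inl rfl
    · exact .inr hyz
    · exact .inr hxy
    by_cases hxz : x = z
    · exact .inl hxz
    refine .inr fun h ↦ ?_
    obtain h | h := h.indep_pair_or_indep_pair hxz (hM y)
    exacts [hxy h, hyz (pair_comm z y ▸ h)]

lemma parallelSetoid_apply {hM : ∀ x, M.Indep {x}} {x y : α} :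
    M.parallelSetoid hM x y ↔ x = y ∨ ¬ M.Indep {x, y} := Iff.rfl

lemma parallelSetoid_ne_top (hM : ∀ x, M.Indep {x}) (hrk : 1 < M.eRank) :
    M.parallelSetoid hM ≠ ⊤ := by
  obtain ⟨B, hB⟩ := M.exists_isBase
  obtain ⟨x, y, hx, hy, hxy⟩ := one_lt_encard_iff.1 (hB.encard_eq_eRank ▸ hrk)
  rw [Ne, Setoid.eq_top_iff]
  push Not
  exact ⟨x, y, by simpa [parallelSetoid_apply, hxy] using hB.indep.subset (pair_subset hx hy)⟩

lemma forall_isBase_ncard_eq_iff {k : ℕ} (hk : k ≠ 0) :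
    (∀ B, M.IsBase B → B.ncard = k) ↔ M.eRank = k := by
  obtain ⟨B₀, hB₀⟩ := M.exists_isBase
  refine ⟨fun h ↦ ?_, fun h B hB ↦ by rw [ncard_def, hB.encard_eq_eRank, h, ENat.toNat_natCast]⟩
  rw [← hB₀.encard_eq_eRank, ← h B₀ hB₀,
    (finite_of_ncard_ne_zero ((h B₀ hB₀).trans_ne hk)).cast_ncard_eq]

end Matroid

namespace Setoid

open Matroid

variable {α : Type*} (s : Setoid α)

def rankTwoMatroid : Matroid α := (unifOn univ 2).comap (Quotient.mk s)

lemma rankTwoMatroid_indep_iff {I : Set α} :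
    s.rankTwoMatroid.Indep I ↔ I.encard ≤ 2 ∧ InjOn (Quotient.mk s) I := by
  rw [rankTwoMatroid, comap_indep_iff, unifOn_indep_iff]
  refine ⟨fun ⟨⟨_, h⟩, hinj⟩ ↦ ⟨hinj.encard_image ▸ h, hinj⟩,
    fun ⟨h, hinj⟩ ↦ ⟨⟨subset_univ _, hinj.encard_image ▸ h⟩, hinj⟩⟩

lemma rankTwoMatroid_indep_pair_iff {x y : α} :
    s.rankTwoMatroid.Indep {x, y} ↔ (s x y → x = y) := by
  rw [rankTwoMatroid_indep_iff, injOn_pair, Quotient.eq]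
  exact and_iff_right ((encard_insert_le _ _).trans (by simp [one_add_one_eq_two]))

lemma rankTwoMatroid_indep_singleton (x : α) : s.rankTwoMatroid.Indep {x} := by
  simpa using s.rankTwoMatroid_indep_pair_iff (x := x) (y := x)

lemma eRank_rankTwoMatroid {s : Setoid α} (hs : s ≠ ⊤) : s.rankTwoMatroid.eRank = 2 := by
  obtain ⟨x, y, hxy⟩ : ∃ x y, ¬ s x y := by simpa [Setoid.eq_top_iff] using hs
  obtain ⟨B, hB⟩ := s.rankTwoMatroid.exists_isBase
  refine le_antisymm (hB.encard_eq_eRank ▸ ((s.rankTwoMatroid_indep_iff).1 hB.indep).1) ?_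
  have hne : x ≠ y := fun h ↦ hxy (h ▸ s.refl x)
  have hpair := (s.rankTwoMatroid_indep_pair_iff).2 (absurd · hxy)
  simpa [encard_pair hne] using hpair.encard_le_eRank

lemma parallelSetoid_rankTwoMatroid :
    s.rankTwoMatroid.parallelSetoid s.rankTwoMatroid_indep_singleton = s := by
  ext x y
  rw [parallelSetoid_apply, rankTwoMatroid_indep_pair_iff]
  by_cases hxy : x = y <;> simp [hxy]

end Setoid

namespace Matroid

variable {α : Type*} {M : Matroid α}

lemma rankTwoMatroid_parallelSetoid (hM : ∀ x, M.Indep {x}) (hrk : M.eRank ≤ 2) :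
    (M.parallelSetoid hM).rankTwoMatroid = M := by
  refine ext_indep (M.ground_eq_univ_of_forall_indep_singleton hM).symm fun I _ ↦ ?_
  rw [Setoid.rankTwoMatroid_indep_iff]
  refine ⟨fun ⟨hI2, hinj⟩ ↦ ?_, fun hI ↦ ⟨hI.encard_le_eRank.trans hrk, fun x hx y hy hxy ↦ ?_⟩⟩
  · obtain hI1 | hI1 := le_or_gt I.encard 1
    · obtain rfl | ⟨x, rfl⟩ := encard_le_one_iff_eq.1 hI1
      exacts [M.empty_indep, hM x]
    obtain ⟨x, y, hx, hy, hne⟩ := one_lt_encard_iff.1 hI1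
    have hIxy : {x, y} = I :=
      (toFinite _).eq_of_subset_of_encard_le (pair_subset hx hy) (by rwa [encard_pair hne])
    exact hIxy ▸ by_contra fun hdep ↦ hne (hinj hx hy (Quotient.sound (.inr hdep)))
  · obtain h | h := Quotient.exact hxy
    exacts [h, absurd (hI.subset (pair_subset hx hy)) h]

def looplessRankTwoEquivSetoid :
    {M : Matroid α // (∀ x, M.Indep {x}) ∧ M.eRank = 2} ≃ {s : Setoid α // s ≠ ⊤} where
  toFun M := ⟨M.1.parallelSetoid M.2.1, parallelSetoid_ne_top M.2.1 (by rw [M.2.2]; norm_num)⟩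
  invFun s := ⟨s.1.rankTwoMatroid, s.1.rankTwoMatroid_indep_singleton,
    Setoid.eRank_rankTwoMatroid s.2⟩
  left_inv M := Subtype.ext (rankTwoMatroid_parallelSetoid M.2.1 M.2.2.le)
  right_inv s := Subtype.ext s.1.parallelSetoid_rankTwoMatroid

end Matroid

lemma Nat.card_subtype_ne {β : Type*} (a : β) : Nat.card {b // b ≠ a} = Nat.card β - 1 := by
  classical
  have e := Equiv.optionSubtypeNe a
  rcases finite_or_infinite {b // b ≠ a} with h | h
  · rw [← Nat.card_congr e, Finite.card_option, Nat.add_sub_cancel]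
  · have : Infinite β := Infinite.of_injective e e.injective
    simp

theorem loopless_rank_two_matroid_count_general (n : ℕ) :
    Nat.card {M : Matroid (Fin n) // M.E = Set.univ ∧ (∀ x : Fin n, M.Indep {x}) ∧
      ∀ B, M.IsBase B → B.ncard = 2} = bellNum n - 1 := by
  have hrk (M : Matroid (Fin n)) : (∀ B, M.IsBase B → B.ncard = 2) ↔ M.eRank = 2 :=
    Matroid.forall_isBase_ncard_eq_iff two_ne_zero
  have hcond (M : Matroid (Fin n)) : (M.E = univ ∧ (∀ x, M.Indep {x}) ∧
      ∀ B, M.IsBase B → B.ncard = 2) ↔ (∀ x, M.Indep {x}) ∧ M.eRank = 2 :=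
    ⟨fun ⟨_, hM, hB⟩ ↦ ⟨hM, (hrk M).1 hB⟩,
      fun ⟨hM, h2⟩ ↦ ⟨M.ground_eq_univ_of_forall_indep_singleton hM, hM, (hrk M).2 h2⟩⟩
  rw [Nat.card_congr ((Equiv.subtypeEquivRight hcond).trans Matroid.looplessRankTwoEquivSetoid),
    Nat.card_subtype_ne, bellNum]

/-- The number of labeled loopless rank-2 matroids on a fixed `n`-element ground set is
`b(n) - 1`. -/
theorem loopless_rank_two_matroid_count (n : ℕ) (hn : 2 ≤ n) :
    Nat.card {M : Matroid (Fin n) // M.E = Set.univ ∧ (∀ x : Fin n, M.Indep {x}) ∧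
      ∀ B, M.IsBase B → B.ncard = 2} = bellNum n - 1 :=
  loopless_rank_two_matroid_count_general n
end

section
/- For every natural number n ≥ 94, the product of the number of loopless rank-1 matroids and the number of loopless rank-3 matroids on a fixed n-element ground set strictly exceeds the square of the number of loopless rank-2 matroids on that set; equivalently, since there is exactly one loopless rank-1 matroid, the number of loopless rank-3 matroids on an n-element set is strictly greater than (b(n) − 1)^2, where b(n) is the n-th Bell number. -/
/-!
A loopless rank-2 matroid is determined by its parallel classes, the fibres of `e ↦ cl {e}`, so
there are at most `n ^ n` of them. On the other hand, if `S` is a family of `3`-sets any two of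
which share at most one point, then every subfamily `T ⊆ S` is the set of circuit-hyperplanes of a
loopless sparse paving matroid of rank 3, whose bases are the `3`-sets outside `T`; so there are
at least `2 ^ |S|` loopless rank-3 matroids. The zero-sum triples of `ℤ/n` form such a family with
at least `n (n - 3) / 6` members, and `n ^ (2n) < 2 ^ (n (n - 3) / 6)` as soon as
`12 (log₂ n + 1) ≤ n - 3`, which holds for `n ≥ 94`.
-/

instance Setoid.finite {α : Type*} [Finite α] : Finite (Setoid α) :=
  Finite.of_injective (fun s : Setoid α => (s : α → α → Prop)) fun _ _ h =>
    Setoid.ext fun a b => (congrFun₂ h a b).to_iff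

lemma Setoid.natCard_le_pow {α : Type*} [Finite α] :
    Nat.card (Setoid α) ≤ Nat.card α ^ Nat.card α := by
  have hf : Function.Injective fun (s : Setoid α) (a : α) => (Quotient.mk s a).out := by
    intro s₁ s₂ h
    ext a b
    simp only [funext_iff] at h
    rw [← Quotient.eq, ← Quotient.eq, ← Quotient.out_inj, ← Quotient.out_inj, h a, h b]
  calc Nat.card (Setoid α) ≤ Nat.card (α → α) := Nat.card_le_card_of_injective _ hf
    _ = _ := Nat.card_fun

structure IsPartialSteinerSystem {α : Type*} (t k : ℕ) (S : Set (Set α)) : Prop where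
  ncard_eq : ∀ B ∈ S, B.ncard = k
  eq_of_subset : ∀ ⦃B₁⦄, B₁ ∈ S → ∀ ⦃B₂⦄, B₂ ∈ S → ∀ ⦃P : Set α⦄, P.ncard = t → P ⊆ B₁ → P ⊆ B₂ →
    B₁ = B₂

namespace IsPartialSteinerSystem

open Set

variable {α : Type*} {t k : ℕ} {S : Set (Set α)}

lemma mono (hS : IsPartialSteinerSystem t k S) {S' : Set (Set α)} (h : S' ⊆ S) :
    IsPartialSteinerSystem t k S' :=
  ⟨fun B hB => hS.ncard_eq B (h hB), fun _ h₁ _ h₂ => hS.eq_of_subset (h h₁) (h h₂)⟩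

lemma eq_of_insert_mem (hS : IsPartialSteinerSystem t k S) {P : Set α} (hP : P.ncard = t)
    {a b : α} (ha : a ∉ P) (haS : insert a P ∈ S) (hbS : insert b P ∈ S) : a = b := by
  have h := hS.eq_of_subset haS hbS hP (subset_insert a P) (subset_insert b P)
  exact (mem_insert_iff.1 (h ▸ mem_insert a P)).resolve_right ha

variable [Finite α] {r : ℕ}

lemma exchangeProperty (hS : IsPartialSteinerSystem (r - 1) r S) :
    Matroid.ExchangeProperty (fun B : Set α => B.ncard = r ∧ B ∉ S) := by
  rintro X Y ⟨hX, hXS⟩ ⟨hY, hYS⟩ a ⟨haX, haY⟩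
  have hP : (X \ {a}).ncard = r - 1 := by rw [ncard_sdiff_singleton_of_mem haX, hX]
  have hr : 0 < r := hX ▸ (ncard_pos).2 ⟨a, haX⟩
  obtain ⟨b, hbY, hbX⟩ : ∃ b ∈ Y, b ∉ X :=
    not_subset.1 fun hYX => haY (eq_of_subset_of_ncard_le hYX (by omega) ▸ haX)
  have hins : ∀ y ∉ X, (insert y (X \ {a})).ncard = r := fun y hy => by
    rw [ncard_insert_of_notMem fun h => hy h.1, hP]
    omega
  -- If all these swaps lay in `S`, they would all contain the `(r - 1)`-set `X \ {a}` and hence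
  -- coincide, which forces `Y` to be one of them.
  by_contra! h
  refine hYS ?_
  suffices Y = insert b (X \ {a}) from this ▸ h b ⟨hbY, hbX⟩ (hins b hbX)
  refine eq_of_subset_of_ncard_le (fun y hy => ?_) (by rw [hins b hbX, hY])
  by_cases hyX : y ∈ X
  · exact mem_insert_of_mem _ ⟨hyX, fun hya => haY (hya ▸ hy)⟩
  · rw [hS.eq_of_insert_mem hP (fun h => hyX h.1) (h y ⟨hy, hyX⟩ (hins y hyX))
      (h b ⟨hbY, hbX⟩ (hins b hbX))]
    exact mem_insert b _

lemma exists_mem_ncard_eq_notMem (hS : IsPartialSteinerSystem (r - 1) r S) (hr : 2 ≤ r)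
    (hα : r < Nat.card α) (x : α) : ∃ B, x ∈ B ∧ B.ncard = r ∧ B ∉ S := by
  obtain ⟨P, hPx, hP⟩ := exists_subset_card_eq (s := {x}ᶜ) (n := r - 2)
    (by rw [ncard_compl, ncard_singleton]; omega)
  have hxP : x ∉ P := fun h => hPx h rfl
  have hQ : (insert x P).ncard = r - 1 := by rw [ncard_insert_of_notMem hxP, hP]; omega
  obtain ⟨f₁, hf₁, f₂, hf₂, hne⟩ :=
    (one_lt_ncard (s := (insert x P)ᶜ)).1 (by rw [ncard_compl, hQ]; omega)
  have hins : ∀ f ∉ insert x P, (insert f (insert x P)).ncard = r := fun f hf => by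
    rw [ncard_insert_of_notMem hf, hQ]
    omega
  by_contra! h
  exact hne (hS.eq_of_insert_mem hQ hf₁
    (h _ (mem_insert_of_mem _ (mem_insert x P)) (hins f₁ hf₁))
    (h _ (mem_insert_of_mem _ (mem_insert x P)) (hins f₂ hf₂)))

end IsPartialSteinerSystem

section ZeroSumTriples

open Finset

variable {G : Type*} [AddCommGroup G] [Fintype G] [DecidableEq G]

variable (G) in
def zeroSumTriples : Finset (Finset G) := {t | t.card = 3 ∧ ∑ x ∈ t, x = 0}

lemma mem_zeroSumTriples {t : Finset G} : t ∈ zeroSumTriples G ↔ t.card = 3 ∧ ∑ x ∈ t, x = 0 := by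
  simp [zeroSumTriples]

lemma eq_of_mem_zeroSumTriples {t : Finset G} (ht : t ∈ zeroSumTriples G) {a b : G} (hab : a ≠ b)
    (ha : a ∈ t) (hb : b ∈ t) : t = {a, b, -(a + b)} := by
  obtain ⟨hcard, hsum⟩ := mem_zeroSumTriples.1 ht
  have hsub : {a, b} ⊆ t := insert_subset ha (singleton_subset_iff.2 hb)
  obtain ⟨c, hc⟩ : ∃ c, t \ {a, b} = {c} :=
    card_eq_one.1 (by rw [card_sdiff_of_subset hsub, hcard, card_pair hab])
  have hc' : c = -(a + b) := by
    refine eq_neg_of_add_eq_zero_left ?_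
    rw [← hsum, ← sum_sdiff hsub, hc, sum_singleton, sum_pair hab]
  rw [← sdiff_union_of_subset hsub, hc, hc']
  ext
  simp [or_comm]

lemma isPartialSteinerSystem_zeroSumTriples :
    IsPartialSteinerSystem 2 3 (((↑) : Finset G → Set G) '' zeroSumTriples G) where
  ncard_eq := by
    rintro _ ⟨t, ht, rfl⟩
    rw [Set.ncard_coe_finset, (mem_zeroSumTriples.1 ht).1]
  eq_of_subset := by
    rintro _ ⟨t₁, ht₁, rfl⟩ _ ⟨t₂, ht₂, rfl⟩ P hP h₁ h₂
    obtain ⟨a, b, hab, rfl⟩ := Set.ncard_eq_two.1 hP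
    simp only [Set.insert_subset_iff, Set.singleton_subset_iff, mem_coe] at h₁ h₂
    rw [eq_of_mem_zeroSumTriples ht₁ hab h₁.1 h₁.2, eq_of_mem_zeroSumTriples ht₂ hab h₂.1 h₂.2]

lemma sq_card_le_six_mul_card_zeroSumTriples :
    Fintype.card G ^ 2 ≤ 6 * #(zeroSumTriples G) + 3 * Fintype.card G := by
  -- A pair `(a, b)` either lies on one of the graphs `b = a`, `b = -2a`, `a = -2b`, or is an
  -- ordered pair of distinct points of the zero-sum triple `{a, b, -(a + b)}`.
  have hcover : (univ : Finset (G × G)) ⊆ (zeroSumTriples G).biUnion offDiag ∪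
      (univ.image (fun a => (a, a)) ∪ univ.image (fun a => (a, -(a + a))) ∪
        univ.image (fun b => (-(b + b), b))) := by
    rintro ⟨a, b⟩ -
    by_cases hab : a = b
    · simp [hab]
    by_cases ha : a = -(a + b)
    · have : b = -(a + a) := by
        rw [eq_neg_iff_add_eq_zero] at ha ⊢
        rw [← ha]; abel
      simp [this]
    by_cases hb : b = -(a + b)
    · have : a = -(b + b) := by
        rw [eq_neg_iff_add_eq_zero] at hb ⊢
        rw [← hb]; abel
      simp [this]
    refine mem_union_left _ (mem_biUnion.2 ⟨{a, b, -(a + b)}, mem_zeroSumTriples.2 ⟨?_, ?_⟩, ?_⟩)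
    · exact card_eq_three.2 ⟨a, b, _, hab, ha, hb, rfl⟩
    · rw [sum_insert (by rw [mem_insert, mem_singleton]; exact not_or.2 ⟨hab, ha⟩), sum_pair hb]
      abel
    · simp [hab]
  have hbad : #(univ.image (fun a => (a, a)) ∪ univ.image (fun a => (a, -(a + a))) ∪
      univ.image (fun b : G => (-(b + b), b))) ≤ 3 * Fintype.card G := by
    calc _ ≤ _ := card_union_le _ _
      _ ≤ _ := add_le_add_left (card_union_le _ _) _
      _ ≤ #(univ : Finset G) + #(univ : Finset G) + #(univ : Finset G) :=
          add_le_add (add_le_add card_image_le card_image_le) card_image_le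
      _ = 3 * Fintype.card G := by rw [card_univ]; ring
  have htriples : #((zeroSumTriples G).biUnion offDiag) ≤ 6 * #(zeroSumTriples G) := by
    refine card_biUnion_le.trans (le_of_eq ?_)
    rw [sum_congr rfl fun t ht => by rw [offDiag_card, (mem_zeroSumTriples.1 ht).1],
      sum_const, smul_eq_mul, mul_comm]
  calc Fintype.card G ^ 2 = #(univ : Finset (G × G)) := by simp [sq]
    _ ≤ _ := card_le_card hcover
    _ ≤ _ := card_union_le _ _
    _ ≤ _ := add_le_add htriples hbad

end ZeroSumTriples

abbrev LooplessMatroidOfRank (α : Type*) (r : ℕ) : Type _ :=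
  {M : Matroid α // M.E = Set.univ ∧ (∀ x, M.Indep {x}) ∧ ∀ B, M.IsBase B → B.ncard = r}

namespace Matroid

open Set

variable {α : Type*} [Finite α]

instance finite : Finite (Matroid α) :=
  Finite.of_injective (fun M : Matroid α => (M.E, M.Indep)) fun _ _ h =>
    ext_indep (congrArg Prod.fst h) fun I _ => iff_of_eq (congrFun (congrArg Prod.snd h) I)

lemma isBase_iff_indep_ncard_eq {M : Matroid α} {r : ℕ} (hr : ∀ B, M.IsBase B → B.ncard = r)
    {B : Set α} : M.IsBase B ↔ M.Indep B ∧ B.ncard = r := by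
  refine ⟨fun hB => ⟨hB.indep, hr B hB⟩, fun ⟨hI, hB⟩ => ?_⟩
  obtain ⟨B', hB', hBB'⟩ := hI.exists_isBase_superset
  rwa [eq_of_subset_of_ncard_le hBB' (by rw [hB, hr B' hB'])]

lemma eq_of_indep_pair_iff {M₁ M₂ : Matroid α} (hE : M₁.E = M₂.E)
    (h₁ : ∀ B, M₁.IsBase B → B.ncard = 2) (h₂ : ∀ B, M₂.IsBase B → B.ncard = 2)
    (h : ∀ a b, M₁.Indep {a, b} ↔ M₂.Indep {a, b}) : M₁ = M₂ := by
  refine ext_isBase hE fun B _ => ?_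
  rw [isBase_iff_indep_ncard_eq h₁, isBase_iff_indep_ncard_eq h₂]
  refine and_congr_left fun hB => ?_
  obtain ⟨a, b, -, rfl⟩ := ncard_eq_two.1 hB
  exact h a b

section SparsePaving

variable {r : ℕ} {S : Set (Set α)}

def sparsePaving (hS : IsPartialSteinerSystem (r - 1) r S) (hB : ∃ B : Set α, B.ncard = r ∧ B ∉ S) :
    Matroid α :=
  Matroid.ofIsBaseOfFinite (toFinite univ) _ hB hS.exchangeProperty fun _ _ => subset_univ _

variable {hS : IsPartialSteinerSystem (r - 1) r S} {hB : ∃ B : Set α, B.ncard = r ∧ B ∉ S}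

@[simp] lemma sparsePaving_isBase_iff {B : Set α} :
    (sparsePaving hS hB).IsBase B ↔ B.ncard = r ∧ B ∉ S := Iff.rfl

lemma mem_iff_ncard_eq_and_not_isBase_sparsePaving {B : Set α} :
    B ∈ S ↔ B.ncard = r ∧ ¬(sparsePaving hS hB).IsBase B := by
  rw [sparsePaving_isBase_iff]
  exact ⟨fun h => ⟨hS.ncard_eq B h, fun h' => h'.2 h⟩,
    fun ⟨h, h'⟩ => not_not.1 fun h'' => h' ⟨h, h''⟩⟩

lemma eq_of_sparsePaving_eq {S' : Set (Set α)} {hS' : IsPartialSteinerSystem (r - 1) r S'}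
    {hB' : ∃ B : Set α, B.ncard = r ∧ B ∉ S'} (h : sparsePaving hS hB = sparsePaving hS' hB') :
    S = S' := by
  ext B
  rw [mem_iff_ncard_eq_and_not_isBase_sparsePaving (hS := hS) (hB := hB), h,
    ← mem_iff_ncard_eq_and_not_isBase_sparsePaving]

end SparsePaving

lemma card_looplessMatroidOfRank_one_pos [Nonempty α] :
    0 < Nat.card (LooplessMatroidOfRank α 1) := by
  obtain ⟨x⟩ := ‹Nonempty α›
  have hS : IsPartialSteinerSystem (1 - 1) 1 (∅ : Set (Set α)) := ⟨by simp, by simp⟩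
  have hB : ∃ B : Set α, B.ncard = 1 ∧ B ∉ (∅ : Set (Set α)) :=
    ⟨{x}, ncard_singleton x, notMem_empty _⟩
  exact Nat.card_pos_iff.2 ⟨⟨⟨sparsePaving hS hB, rfl,
    fun y => (sparsePaving_isBase_iff.2 ⟨ncard_singleton y, notMem_empty _⟩).indep,
    fun _ hB => (sparsePaving_isBase_iff.1 hB).1⟩⟩, inferInstance⟩

lemma card_looplessMatroidOfRank_two_le :
    Nat.card (LooplessMatroidOfRank α 2) ≤ Nat.card α ^ Nat.card α := by
  have hf : Function.Injective fun M : LooplessMatroidOfRank α 2 =>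
      Setoid.ker fun a => M.1.closure {a} := by
    rintro ⟨M₁, hE₁, hl₁, hr₁⟩ ⟨M₂, hE₂, hl₂, hr₂⟩ h
    refine Subtype.ext (eq_of_indep_pair_iff (hE₁.trans hE₂.symm) hr₁ hr₂ fun a b => ?_)
    obtain rfl | hab := eq_or_ne a b
    · rw [pair_eq_singleton]
      exact iff_of_true (hl₁ a) (hl₂ a)
    have hcl := Setoid.ext_iff.1 h a b
    simp only [Setoid.ker_def] at hcl
    rwa [(indep_singleton.1 (hl₁ a)).closure_eq_closure_iff_eq_or_dep (indep_singleton.1 (hl₁ b)),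
      (indep_singleton.1 (hl₂ a)).closure_eq_closure_iff_eq_or_dep (indep_singleton.1 (hl₂ b)),
      or_iff_right hab, or_iff_right hab, not_iff_not] at hcl
  calc Nat.card (LooplessMatroidOfRank α 2) ≤ Nat.card (Setoid α) :=
        Nat.card_le_card_of_injective _ hf
    _ ≤ _ := Setoid.natCard_le_pow

lemma two_pow_ncard_le_card_looplessMatroidOfRank {r : ℕ} {S : Set (Set α)}
    (hS : IsPartialSteinerSystem (r - 1) r S) (hr : 2 ≤ r) (hα : r < Nat.card α) :
    2 ^ S.ncard ≤ Nat.card (LooplessMatroidOfRank α r) := by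
  have hbases : ∀ T : 𝒫 S, ∀ x : α, ∃ B, x ∈ B ∧ B.ncard = r ∧ B ∉ T.1 := fun T =>
    (hS.mono T.2).exists_mem_ncard_eq_notMem hr hα
  obtain ⟨x₀⟩ : Nonempty α := (Nat.card_pos_iff.1 (by omega)).1
  let F : 𝒫 S → LooplessMatroidOfRank α r := fun T =>
    ⟨sparsePaving (hS.mono T.2) ((hbases T x₀).imp fun _ h => h.2), rfl, fun x => by
      obtain ⟨B, hxB, hB⟩ := hbases T x
      exact (sparsePaving_isBase_iff.2 hB).indep.subset (singleton_subset_iff.2 hxB),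
      fun _ hB => (sparsePaving_isBase_iff.1 hB).1⟩
  have hF : Function.Injective F := fun T₁ T₂ h => by
    have h' := congrArg Subtype.val h
    simp only [F] at h'
    exact Subtype.ext (eq_of_sparsePaving_eq h')
  calc 2 ^ S.ncard = Nat.card (𝒫 S) := by rw [Nat.card_coe_set_eq, ncard_powerset]
    _ ≤ _ := Nat.card_le_card_of_injective F hF

end Matroid

lemma pow_two_mul_lt_two_pow {n m : ℕ} (hn : 94 ≤ n) (hm : n ^ 2 ≤ 6 * m + 3 * n) :
    n ^ (2 * n) < 2 ^ m := by
  set k := Nat.log 2 n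
  have hlog : 12 * k + 15 ≤ n := by
    rcases Nat.lt_or_ge k 7 with hk | hk
    · omega
    · obtain ⟨j, hj⟩ := Nat.exists_eq_add_of_le' hk
      have h₁ : 2 ^ k ≤ n := Nat.pow_log_le_self 2 (by omega)
      have h₂ : 2 ^ k = 128 * 2 ^ j := by rw [hj, pow_add]; ring
      have h₃ := @Nat.lt_two_pow_self j
      omega
  calc n ^ (2 * n) < (2 ^ (k + 1)) ^ (2 * n) :=
        Nat.pow_lt_pow_left (Nat.lt_pow_succ_log_self one_lt_two n) (by omega)
    _ = 2 ^ (2 * n * (k + 1)) := by rw [← pow_mul, mul_comm]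
    _ ≤ 2 ^ m := Nat.pow_le_pow_right two_pos (by nlinarith)

/-- For `n ≥ 94`, the product of the numbers of labeled loopless rank-1 and rank-3
matroids on a fixed `n`-element ground set strictly exceeds the square of the number of
labeled loopless rank-2 matroids on that set. -/
theorem loopless_matroid_count_log_convex_start (n : ℕ) (hn : 94 ≤ n) :
    Nat.card {M : Matroid (Fin n) // M.E = Set.univ ∧ (∀ x : Fin n, M.Indep {x}) ∧
        ∀ B, M.IsBase B → B.ncard = 1} *
      Nat.card {M : Matroid (Fin n) // M.E = Set.univ ∧ (∀ x : Fin n, M.Indep {x}) ∧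
        ∀ B, M.IsBase B → B.ncard = 3} >
      Nat.card {M : Matroid (Fin n) // M.E = Set.univ ∧ (∀ x : Fin n, M.Indep {x}) ∧
        ∀ B, M.IsBase B → B.ncard = 2} ^ 2 := by
  have : NeZero n := ⟨by omega⟩
  have h₁ := Matroid.card_looplessMatroidOfRank_one_pos (α := Fin n)
  have h₂ : Nat.card (LooplessMatroidOfRank (Fin n) 2) ≤ n ^ n := by
    simpa using Matroid.card_looplessMatroidOfRank_two_le (α := Fin n)
  have h₃ := Matroid.two_pow_ncard_le_card_looplessMatroidOfRank (r := 3)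
    (isPartialSteinerSystem_zeroSumTriples (G := Fin n)) (by norm_num) (by rw [Nat.card_fin]; omega)
  rw [Set.ncard_image_of_injective _ Finset.coe_injective, Set.ncard_coe_finset] at h₃
  have hT : n ^ (2 * n) < 2 ^ (zeroSumTriples (Fin n)).card :=
    pow_two_mul_lt_two_pow hn (by simpa using sq_card_le_six_mul_card_zeroSumTriples (G := Fin n))
  calc Nat.card (LooplessMatroidOfRank (Fin n) 2) ^ 2 ≤ (n ^ n) ^ 2 := Nat.pow_le_pow_left h₂ 2
    _ = n ^ (2 * n) := by rw [← pow_mul, mul_comm]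
    _ < 2 ^ (zeroSumTriples (Fin n)).card := hT
    _ ≤ Nat.card (LooplessMatroidOfRank (Fin n) 3) := h₃
    _ ≤ _ := Nat.le_mul_of_pos_left _ h₁
end
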